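/- Let X₀ ≠ 0 be a real m×n matrix with rank(X₀) ≤ k, and let 𝒜 be a linear map with 𝒜(X₀) = b. For any real number α with 1/‖X₀‖_F ≤ α ≤ ‖X₀‖_{k,2}^⋆/‖X₀‖_F², the matrix Y = 0 is an optimal solution of min { ‖X₀ + Y‖_{k,2}^⋆ − α·⟨X₀, Y⟩ : 𝒜(Y) = 0 }. -/

import Mathlib

/-!
For `rank X₀ ≤ k` the rows of `X₀` lie in a subspace `K` of dimension at most `k`, so
`⟨X₀, X⟩ = ⟨X₀, X P_K⟩ ≤ ‖X₀‖_F ‖X P_K‖_F`, and `‖X P_K‖_F² = ∑_j ‖X w_j‖²` for an orthonormal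
basis `(w_j)` of `K`; by Ky Fan's maximum principle this is at most the sum of the `k` largest
eigenvalues of `Xᵀ X`, i.e. `‖X‖_{k,2}²`. Hence `‖X₀‖_{k,2}^⋆ ≤ ‖X₀‖_F`, which together with the
two bounds on `α` forces `α = 1 / ‖X₀‖_F`. Testing the dual norm of `X₀ + Y` against the feasible
matrix `X₀ / ‖X₀‖_F` gives `‖X₀ + Y‖_{k,2}^⋆ ≥ ‖X₀‖_F + ⟨X₀, Y⟩ / ‖X₀‖_F`, which is the claim.
-/

open Matrix

theorem Matrix.isHermitian_transpose_mul_self {m n : Type*} {α : Type*} [CommSemiring α]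
    [StarRing α] [TrivialStar α] [Fintype m] (A : Matrix m n α) : (Aᵀ * A).IsHermitian := by
  rw [IsHermitian, conjTranspose_mul, conjTranspose_eq_transpose_of_trivial,
    conjTranspose_eq_transpose_of_trivial, transpose_transpose]

/-- Singular values of a real `m × n` matrix, sorted in decreasing order
(indexed by `Fin n`; `σ i = sqrt` of the `i`-th largest eigenvalue of `Aᵀ * A`). -/
noncomputable def svalsDesc {m n : ℕ} (A : Matrix (Fin m) (Fin n) ℝ) : Fin n → ℝ :=
  fun i =>
    Real.sqrt
      (((Matrix.isHermitian_transpose_mul_self A).eigenvalues ∘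
        Tuple.sort (Matrix.isHermitian_transpose_mul_self A).eigenvalues) i.rev)

/-- Ky Fan 2-k-norm: `(∑_{i=1}^k σ_i(A)²)^{1/2}`. -/
noncomputable def kyFan2 {m n : ℕ} (k : ℕ) (A : Matrix (Fin m) (Fin n) ℝ) : ℝ :=
  Real.sqrt (∑ i ∈ Finset.univ.filter (fun i : Fin n => (i : ℕ) < k), (svalsDesc A i) ^ 2)

/-- Frobenius inner product `⟨A, B⟩ = trace (Aᵀ B)`. -/
noncomputable def frobInner {m n : ℕ} (A B : Matrix (Fin m) (Fin n) ℝ) : ℝ :=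
  ∑ i, ∑ j, A i j * B i j

/-- Frobenius norm. -/
noncomputable def frobNorm {m n : ℕ} (A : Matrix (Fin m) (Fin n) ℝ) : ℝ :=
  Real.sqrt (∑ i, ∑ j, (A i j) ^ 2)

/-- Dual Ky Fan 2-k-norm `‖A‖_{k,2}^⋆ = max {⟨A,X⟩ : ‖X‖_{k,2} ≤ 1}`. -/
noncomputable def kyFan2Dual {m n : ℕ} (k : ℕ) (A : Matrix (Fin m) (Fin n) ℝ) : ℝ :=
  sSup {c : ℝ | ∃ X : Matrix (Fin m) (Fin n) ℝ, kyFan2 k X ≤ 1 ∧ c = frobInner A X}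

/-- The linear map `𝒜` satisfies the restricted isometry inequality with constant `δ`
for all matrices of rank at most `r`. -/
def HasRIP {m n p : ℕ} (𝒜 : Matrix (Fin m) (Fin n) ℝ →ₗ[ℝ] EuclideanSpace ℝ (Fin p))
    (r : ℕ) (δ : ℝ) : Prop :=
  ∀ X : Matrix (Fin m) (Fin n) ℝ, X.rank ≤ r →
    (1 - δ) * frobNorm X ≤ ‖𝒜 X‖ ∧ ‖𝒜 X‖ ≤ (1 + δ) * frobNorm X

open Finset
open scoped RealInnerProductSpace

theorem sum_mul_le_sum_of_forall_le {ι : Type*} [Fintype ι] {μ d : ι → ℝ}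
    (s : Finset ι) (hμ : ∀ i, 0 ≤ μ i) (hs : ∀ i ∈ s, ∀ j ∉ s, μ j ≤ μ i)
    (hd₀ : ∀ i, 0 ≤ d i) (hd₁ : ∀ i, d i ≤ 1) (hd : ∑ i, d i ≤ #s) :
    ∑ i, μ i * d i ≤ ∑ i ∈ s, μ i := by
  classical
  obtain ⟨T, hT₀, hTs, hTsc⟩ : ∃ T, 0 ≤ T ∧ (∀ i ∈ s, T ≤ μ i) ∧ ∀ j ∉ s, μ j ≤ T := by
    by_cases h : sᶜ.Nonempty
    · obtain ⟨j, hj⟩ := h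
      refine ⟨sᶜ.sup' ⟨j, hj⟩ μ, (hμ j).trans (le_sup' μ hj), fun i hi => ?_, fun j hj => ?_⟩
      · exact sup'_le _ _ fun j hj => hs i hi j (mem_compl.1 hj)
      · exact le_sup' μ (mem_compl.2 hj)
    · exact ⟨0, le_rfl, fun i _ => hμ i, fun j hj => absurd ⟨j, mem_compl.2 hj⟩ h⟩
  have hpoint (i : ι) :
      μ i * d i ≤ (if i ∈ s then μ i else 0) + T * (d i - if i ∈ s then 1 else 0) := by
    split_ifs with hi
    · nlinarith [hTs i hi, hd₁ i]
    · nlinarith [hTsc i hi, hd₀ i]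
  calc ∑ i, μ i * d i
      ≤ ∑ i, ((if i ∈ s then μ i else 0) + T * (d i - if i ∈ s then 1 else 0)) :=
        sum_le_sum fun i _ => hpoint i
    _ = ∑ i ∈ s, μ i + T * (∑ i, d i - #s) := by
        rw [sum_add_distrib, ← mul_sum, sum_sub_distrib]
        simp [sum_ite_mem]
    _ ≤ ∑ i ∈ s, μ i := by nlinarith

namespace Matrix.PosSemidef

variable {n : Type*} [Fintype n] [DecidableEq n] {S : Matrix n n ℝ} (hS : S.PosSemidef)

theorem inner_toEuclideanLin_self (x : EuclideanSpace ℝ n) :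
    ⟪x, toEuclideanLin S x⟫ = ∑ i, hS.1.eigenvalues i * ⟪hS.1.eigenvectorBasis i, x⟫ ^ 2 := by
  rw [← hS.1.eigenvectorBasis.sum_inner_mul_inner]
  refine sum_congr rfl fun i _ => ?_
  have hsymm := isSymmetric_toEuclideanLin_iff.mpr hS.1 (hS.1.eigenvectorBasis i) x
  have heig : toEuclideanLin S (hS.1.eigenvectorBasis i) =
      hS.1.eigenvalues i • hS.1.eigenvectorBasis i := by
    ext j
    simpa using congrFun (hS.1.mulVec_eigenvectorBasis i) j
  rw [← hsymm, heig, real_inner_smul_left, real_inner_comm]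
  ring

/-- Ky Fan's maximum principle. -/
theorem sum_inner_toEuclideanLin_le {ι : Type*} [Fintype ι] {w : ι → EuclideanSpace ℝ n}
    (hw : Orthonormal ℝ w) (s : Finset n)
    (hs : ∀ i ∈ s, ∀ j ∉ s, hS.1.eigenvalues j ≤ hS.1.eigenvalues i)
    (hcard : Fintype.card ι ≤ #s) :
    ∑ j, ⟪w j, toEuclideanLin S (w j)⟫ ≤ ∑ i ∈ s, hS.1.eigenvalues i := by
  set v := hS.1.eigenvectorBasis
  calc ∑ j, ⟪w j, toEuclideanLin S (w j)⟫
      = ∑ i, hS.1.eigenvalues i * ∑ j, ⟪v i, w j⟫ ^ 2 := by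
        simp_rw [hS.inner_toEuclideanLin_self, mul_sum]
        exact sum_comm
    _ ≤ ∑ i ∈ s, hS.1.eigenvalues i := by
        refine sum_mul_le_sum_of_forall_le s hS.eigenvalues_nonneg hs
          (fun i => sum_nonneg fun j _ => sq_nonneg _) (fun i => ?_) ?_
        · simpa [v.orthonormal.1 i, real_inner_comm] using
            hw.sum_inner_products_le (v i) (s := univ)
        · rw [sum_comm]
          simp_rw [v.sum_sq_inner_right, hw.1, one_pow, sum_const, card_univ, nsmul_one]
          exact_mod_cast hcard

end Matrix.PosSemidef

theorem inner_toEuclideanLin_transpose_mul_self {m n : Type*} [Fintype m] [Fintype n]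
    [DecidableEq n] (X : Matrix m n ℝ) (w : EuclideanSpace ℝ n) :
    ⟪w, Matrix.toEuclideanLin (Xᵀ * X) w⟫ = ∑ i, ⟪WithLp.toLp 2 (X i), w⟫ ^ 2 := by
  simp only [Matrix.toLpLin_apply, PiLp.inner_apply, ← Matrix.mulVec_mulVec, Matrix.mulVec,
    dotProduct, Matrix.transpose_apply, mul_sum, RCLike.inner_apply, Real.ringHom_apply, sum_mul,
    sq]
  rw [sum_comm]
  exact sum_congr rfl fun _ _ => sum_congr rfl fun _ _ => sum_congr rfl fun _ _ => by ring

theorem Submodule.sum_inner_le_sqrt_mul_sqrt {ι E : Type*} [Fintype ι] [NormedAddCommGroup E]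
    [InnerProductSpace ℝ E] (K : Submodule ℝ E) [K.HasOrthogonalProjection] {a : ι → E}
    (ha : ∀ i, a i ∈ K) (x : ι → E) :
    ∑ i, ⟪a i, x i⟫ ≤
      √(∑ i, ‖a i‖ ^ 2) * √(∑ i, ‖K.orthogonalProjectionOnto (x i)‖ ^ 2) :=
  calc ∑ i, ⟪a i, x i⟫ = ∑ i, ⟪(⟨a i, ha i⟩ : K), K.orthogonalProjectionOnto (x i)⟫ := by
        simp_rw [K.inner_orthogonalProjectionOnto_eq_of_mem_left]
    _ ≤ ∑ i, ‖a i‖ * ‖K.orthogonalProjectionOnto (x i)‖ :=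
        sum_le_sum fun i _ => real_inner_le_norm _ _
    _ ≤ _ := Real.sum_mul_le_sqrt_mul_sqrt _ _ _

section Frobenius

variable {m n : ℕ}

noncomputable def frobVec : Matrix (Fin m) (Fin n) ℝ ≃ₗ[ℝ] EuclideanSpace ℝ (Fin m × Fin n) :=
  (LinearEquiv.curry ℝ ℝ (Fin m) (Fin n)).symm.trans (WithLp.linearEquiv 2 ℝ _).symm

@[simp]
theorem frobVec_apply (A : Matrix (Fin m) (Fin n) ℝ) (p : Fin m × Fin n) :
    frobVec A p = A p.1 p.2 :=
  rfl

theorem frobInner_eq_inner (A B : Matrix (Fin m) (Fin n) ℝ) :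
    frobInner A B = ⟪frobVec A, frobVec B⟫ := by
  simp [frobInner, PiLp.inner_apply, Fintype.sum_prod_type, mul_comm]

theorem frobNorm_eq_norm (A : Matrix (Fin m) (Fin n) ℝ) : frobNorm A = ‖frobVec A‖ := by
  simp [frobNorm, EuclideanSpace.norm_eq, Fintype.sum_prod_type]

theorem frobNorm_nonneg (A : Matrix (Fin m) (Fin n) ℝ) : 0 ≤ frobNorm A :=
  Real.sqrt_nonneg _

theorem frobNorm_pos {A : Matrix (Fin m) (Fin n) ℝ} (hA : A ≠ 0) : 0 < frobNorm A := by
  rw [frobNorm_eq_norm]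
  exact norm_pos_iff.2 (frobVec.map_ne_zero_iff.2 hA)

theorem frobInner_eq_sum_inner_rows (A B : Matrix (Fin m) (Fin n) ℝ) :
    frobInner A B = ∑ i, ⟪WithLp.toLp 2 (A i), WithLp.toLp 2 (B i)⟫ := by
  simp [frobInner, PiLp.inner_apply, mul_comm]

theorem frobNorm_eq_sqrt_sum_norm_rows (A : Matrix (Fin m) (Fin n) ℝ) :
    frobNorm A = √(∑ i, ‖WithLp.toLp 2 (A i)‖ ^ 2) := by
  simp [frobNorm, EuclideanSpace.norm_sq_eq]

theorem frobNorm_sq_eq_sum_eigenvalues (A : Matrix (Fin m) (Fin n) ℝ) :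
    frobNorm A ^ 2 = ∑ i, (isHermitian_transpose_mul_self A).eigenvalues i := by
  have htrace := (isHermitian_transpose_mul_self A).trace_eq_sum_eigenvalues
  simp only [RCLike.ofReal_real_eq_id, id] at htrace
  rw [← htrace, frobNorm_eq_norm, EuclideanSpace.norm_sq_eq, Fintype.sum_prod_type]
  simp only [frobVec_apply, Real.norm_eq_abs, Matrix.trace, Matrix.diag, Matrix.mul_apply,
    Matrix.transpose_apply, sq, abs_mul_abs_self]
  exact sum_comm

end Frobenius

section KyFan

variable {m n : ℕ}

theorem kyFan2_nonneg (k : ℕ) (A : Matrix (Fin m) (Fin n) ℝ) : 0 ≤ kyFan2 k A :=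
  Real.sqrt_nonneg _

theorem exists_kyFan2_sq_eq_sum_eigenvalues (k : ℕ) (A : Matrix (Fin m) (Fin n) ℝ) :
    ∃ s : Finset (Fin n), #s = min n k ∧
      (∀ i ∈ s, ∀ j ∉ s, (isHermitian_transpose_mul_self A).eigenvalues j ≤
        (isHermitian_transpose_mul_self A).eigenvalues i) ∧
      kyFan2 k A ^ 2 = ∑ i ∈ s, (isHermitian_transpose_mul_self A).eigenvalues i := by
  set eig := (isHermitian_transpose_mul_self A).eigenvalues
  set σ := Tuple.sort eig
  have hmono : Monotone (eig ∘ σ) := Tuple.monotone_sort eig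
  -- `σ` sorts increasingly, so `svalsDesc A i` comes from the eigenvalue at `σ i.rev`
  let e : Fin n ≃ Fin n := Fin.revPerm.trans σ
  refine ⟨(univ.filter fun i : Fin n => (i : ℕ) < k).map e.toEmbedding,
    by simp [Fin.card_filter_val_lt], ?_, ?_⟩
  · intro i hi j hj
    obtain ⟨a, ha, rfl⟩ := mem_map.1 hi
    obtain ⟨b, rfl⟩ := e.surjective j
    have hb : ¬ (b : ℕ) < k := fun hb => hj (mem_map_of_mem _ (by simpa using hb))
    simp only [mem_filter, mem_univ, true_and] at ha
    exact hmono (Fin.rev_le_rev.2 (by omega))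
  · rw [kyFan2, Real.sq_sqrt (sum_nonneg fun _ _ => sq_nonneg _), sum_map]
    exact sum_congr rfl fun i _ =>
      Real.sq_sqrt (Matrix.eigenvalues_conjTranspose_mul_self_nonneg A _)

theorem kyFan2_le_frobNorm (k : ℕ) (A : Matrix (Fin m) (Fin n) ℝ) :
    kyFan2 k A ≤ frobNorm A := by
  obtain ⟨s, -, -, hs⟩ := exists_kyFan2_sq_eq_sum_eigenvalues k A
  refine (pow_le_pow_iff_left₀ (kyFan2_nonneg k A) (frobNorm_nonneg A) two_ne_zero).1 ?_
  rw [hs, frobNorm_sq_eq_sum_eigenvalues]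
  exact sum_le_univ_sum_of_nonneg fun i => Matrix.eigenvalues_conjTranspose_mul_self_nonneg A i

theorem frobNorm_le_sqrt_mul_kyFan2 {k : ℕ} (hk : 1 ≤ k) (A : Matrix (Fin m) (Fin n) ℝ) :
    frobNorm A ≤ √n * kyFan2 k A := by
  obtain ⟨s, hs_card, hs, hs_sum⟩ := exists_kyFan2_sq_eq_sum_eigenvalues k A
  have heig_nonneg := Matrix.eigenvalues_conjTranspose_mul_self_nonneg A
  have hle (i : Fin n) : (isHermitian_transpose_mul_self A).eigenvalues i ≤ kyFan2 k A ^ 2 := by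
    rw [hs_sum]
    by_cases hi : i ∈ s
    · exact single_le_sum (fun j _ => heig_nonneg j) hi
    · obtain ⟨j, hj⟩ : s.Nonempty := card_pos.1 (hs_card ▸ lt_min i.pos hk)
      exact (hs j hj i hi).trans (single_le_sum (fun j _ => heig_nonneg j) hj)
  have hsq : frobNorm A ^ 2 ≤ n * kyFan2 k A ^ 2 :=
    calc frobNorm A ^ 2 = ∑ i, (isHermitian_transpose_mul_self A).eigenvalues i :=
          frobNorm_sq_eq_sum_eigenvalues A
      _ ≤ ∑ _i : Fin n, kyFan2 k A ^ 2 := sum_le_sum fun i _ => hle i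
      _ = n * kyFan2 k A ^ 2 := by simp
  refine (pow_le_pow_iff_left₀ (frobNorm_nonneg A)
    (mul_nonneg (Real.sqrt_nonneg _) (kyFan2_nonneg k A)) two_ne_zero).1 ?_
  rwa [mul_pow, Real.sq_sqrt n.cast_nonneg]

theorem frobInner_le_frobNorm_mul_kyFan2 {k : ℕ} {A : Matrix (Fin m) (Fin n) ℝ}
    (hA : A.rank ≤ k) (X : Matrix (Fin m) (Fin n) ℝ) :
    frobInner A X ≤ frobNorm A * kyFan2 k X := by
  set K := Submodule.span ℝ (Set.range fun i => WithLp.toLp 2 (A i))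
  set b := stdOrthonormalBasis ℝ K
  have hK : Module.finrank ℝ K ≤ min n k := by
    refine le_min ((Submodule.finrank_le K).trans_eq finrank_euclideanSpace_fin) ?_
    refine le_of_eq_of_le ?_ hA
    rw [Matrix.rank_eq_finrank_span_row,
      ← LinearEquiv.finrank_map_eq (WithLp.linearEquiv 2 ℝ (Fin n → ℝ)).symm, Submodule.map_span,
      ← Set.range_comp]
    rfl
  obtain ⟨s, hs_card, hs, hs_sum⟩ := exists_kyFan2_sq_eq_sum_eigenvalues k X
  have hS : (Xᵀ * X).PosSemidef := by
    simpa using Matrix.posSemidef_conjTranspose_mul_self X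
  have hproj (x : EuclideanSpace ℝ (Fin n)) :
      ‖K.orthogonalProjectionOnto x‖ ^ 2 = ∑ j, ⟪(b j : EuclideanSpace ℝ (Fin n)), x⟫ ^ 2 := by
    rw [← b.sum_sq_inner_right]
    simp_rw [K.inner_orthogonalProjectionOnto_eq_of_mem_left]
  have hgram : ∑ i, ‖K.orthogonalProjectionOnto (WithLp.toLp 2 (X i))‖ ^ 2 ≤ kyFan2 k X ^ 2 :=
    calc ∑ i, ‖K.orthogonalProjectionOnto (WithLp.toLp 2 (X i))‖ ^ 2
        = ∑ j, ⟪(b j : EuclideanSpace ℝ (Fin n)), Matrix.toEuclideanLin (Xᵀ * X) (b j)⟫ := by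
          simp_rw [hproj, inner_toEuclideanLin_transpose_mul_self, real_inner_comm]
          exact sum_comm
      _ ≤ ∑ i ∈ s, hS.1.eigenvalues i :=
          hS.sum_inner_toEuclideanLin_le (b.orthonormal.comp_linearIsometry K.subtypeₗᵢ) s hs
            (by simpa [hs_card] using hK)
      _ = kyFan2 k X ^ 2 := hs_sum.symm
  calc frobInner A X = ∑ i, ⟪WithLp.toLp 2 (A i), WithLp.toLp 2 (X i)⟫ :=
        frobInner_eq_sum_inner_rows A X
    _ ≤ √(∑ i, ‖WithLp.toLp 2 (A i)‖ ^ 2) *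
          √(∑ i, ‖K.orthogonalProjectionOnto (WithLp.toLp 2 (X i))‖ ^ 2) :=
        K.sum_inner_le_sqrt_mul_sqrt (fun i => Submodule.subset_span ⟨i, rfl⟩) _
    _ ≤ frobNorm A * kyFan2 k X := by
        rw [← frobNorm_eq_sqrt_sum_norm_rows]
        exact mul_le_mul_of_nonneg_left (Real.sqrt_le_iff.2 ⟨kyFan2_nonneg k X, hgram⟩)
          (frobNorm_nonneg A)

theorem kyFan2Dual_le_frobNorm {k : ℕ} {A : Matrix (Fin m) (Fin n) ℝ} (hA : A.rank ≤ k) :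
    kyFan2Dual k A ≤ frobNorm A := by
  refine Real.sSup_le ?_ (frobNorm_nonneg A)
  rintro _ ⟨X, hX, rfl⟩
  calc frobInner A X ≤ frobNorm A * kyFan2 k X := frobInner_le_frobNorm_mul_kyFan2 hA X
    _ ≤ frobNorm A := mul_le_of_le_one_right (frobNorm_nonneg A) hX

theorem frobInner_le_kyFan2Dual {k : ℕ} (hk : 1 ≤ k) (A : Matrix (Fin m) (Fin n) ℝ)
    {X : Matrix (Fin m) (Fin n) ℝ} (hX : kyFan2 k X ≤ 1) : frobInner A X ≤ kyFan2Dual k A := by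
  refine le_csSup ⟨frobNorm A * √n, ?_⟩ ⟨X, hX, rfl⟩
  rintro _ ⟨Y, hY, rfl⟩
  calc frobInner A Y ≤ frobNorm A * frobNorm Y := by
        rw [frobInner_eq_inner, frobNorm_eq_norm, frobNorm_eq_norm]
        exact real_inner_le_norm _ _
    _ ≤ frobNorm A * (√n * 1) := by
        gcongr
        · exact frobNorm_nonneg A
        · exact (frobNorm_le_sqrt_mul_kyFan2 hk Y).trans (by gcongr)
    _ = frobNorm A * √n := by rw [mul_one]

end KyFan

theorem zero_optimal_for_alpha_general {m n p k : ℕ} (hk1 : 1 ≤ k)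
    (X₀ : Matrix (Fin m) (Fin n) ℝ) (hX0 : X₀ ≠ 0) (hr : X₀.rank ≤ k)
    (𝒜 : Matrix (Fin m) (Fin n) ℝ →ₗ[ℝ] EuclideanSpace ℝ (Fin p))
    (α : ℝ) (hα1 : 1 / frobNorm X₀ ≤ α) (hα2 : α ≤ kyFan2Dual k X₀ / frobNorm X₀ ^ 2) :
    ∀ Y : Matrix (Fin m) (Fin n) ℝ, 𝒜 Y = 0 →
      kyFan2Dual k X₀ ≤ kyFan2Dual k (X₀ + Y) - α * frobInner X₀ Y := by
  intro Y _
  set c := frobNorm X₀ with hc_def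
  have hc : 0 < c := frobNorm_pos hX0
  have hdual : kyFan2Dual k X₀ ≤ c := kyFan2Dual_le_frobNorm hr
  have hα : α = c⁻¹ := by
    refine le_antisymm ?_ (by simpa using hα1)
    calc α ≤ kyFan2Dual k X₀ / c ^ 2 := hα2
      _ ≤ c / c ^ 2 := by gcongr
      _ = c⁻¹ := by field_simp
  have hfeas : kyFan2 k (c⁻¹ • X₀) ≤ 1 := by
    refine (kyFan2_le_frobNorm k _).trans_eq ?_
    rw [frobNorm_eq_norm, map_smul, norm_smul, ← frobNorm_eq_norm,
      Real.norm_of_nonneg (inv_nonneg.2 hc.le), inv_mul_cancel₀ hc.ne']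
  have hval : frobInner (X₀ + Y) (c⁻¹ • X₀) = c + c⁻¹ * frobInner X₀ Y := by
    simp only [frobInner_eq_inner, map_add, map_smul, inner_add_left, real_inner_smul_right,
      real_inner_self_eq_norm_sq, ← frobNorm_eq_norm, ← hc_def, real_inner_comm (frobVec X₀)]
    field_simp
  have hlow := frobInner_le_kyFan2Dual hk1 (X₀ + Y) hfeas
  rw [hα]
  linarith

/-- for `X₀ ≠ 0` of rank ≤ k and any `α` with
`1/‖X₀‖_F ≤ α ≤ ‖X₀‖_{k,2}^⋆/‖X₀‖_F²`, `Y = 0` is optimal for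
`min {‖X₀+Y‖_{k,2}^⋆ − α⟨X₀,Y⟩ : 𝒜 Y = 0}`. -/
theorem zero_optimal_for_alpha {m n p k : ℕ} (hk1 : 1 ≤ k) (hk : k ≤ min m n)
    (X₀ : Matrix (Fin m) (Fin n) ℝ) (hX0 : X₀ ≠ 0) (hr : X₀.rank ≤ k)
    (𝒜 : Matrix (Fin m) (Fin n) ℝ →ₗ[ℝ] EuclideanSpace ℝ (Fin p))
    (b : EuclideanSpace ℝ (Fin p)) (hA : 𝒜 X₀ = b)
    (α : ℝ) (hα1 : 1 / frobNorm X₀ ≤ α) (hα2 : α ≤ kyFan2Dual k X₀ / frobNorm X₀ ^ 2) :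
    ∀ Y : Matrix (Fin m) (Fin n) ℝ, 𝒜 Y = 0 →
      kyFan2Dual k X₀ ≤ kyFan2Dual k (X₀ + Y) - α * frobInner X₀ Y :=
  zero_optimal_for_alpha_general hk1 X₀ hX0 hr 𝒜 α hα1 hα2
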